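/- arXiv:1708.05761 — 5 statements merged into one kernel-verified Lean document; each statement's English description precedes it below -/
import Mathlib

section
/- Let R be a Noetherian integral domain with p in its Jacobson radical, and let I, J be ideals. Then (I:J)^{epf} ⊆ (I^{epf} : J). In particular, if I^{epf} = I then (I:J)^{epf} = (I:J). -/
/-- The absolute integral closure `R⁺` of a domain `R`: the integral closure of `R`
in a fixed algebraic closure of its fraction field. -/
noncomputable abbrev absIntClosure (R : Type) [CommRing R] [IsDomain R] : Type :=
  ↥(integralClosure R (AlgebraicClosure (FractionRing R)))

/-- `x` lies in the full extended plus closure `I^{epf}` of the ideal `I`: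
there are a nonzero `c ∈ R` and a compatible system `f` of `p`-power roots of `c`
in `R⁺` such that `c^{1/pⁿ} x ∈ (I, p^N) R⁺` for all `n` and all `N > 0`. -/
noncomputable def epf (R : Type) [CommRing R] [IsDomain R] (p : ℕ) (I : Ideal R) : Set R :=
  {x | ∃ c : R, c ≠ 0 ∧ ∃ f : ℕ → absIntClosure R,
    f 0 = algebraMap R (absIntClosure R) c ∧ (∀ n, (f (n + 1)) ^ p = f n) ∧
    ∀ n N : ℕ, 0 < N →
      f n * algebraMap R (absIntClosure R) x ∈
        Ideal.map (algebraMap R (absIntClosure R)) I ⊔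
          Ideal.span {(p : absIntClosure R) ^ N}}


theorem Ideal.colon_mul_le {R : Type*} [CommSemiring R] (I J : Ideal R) :
    I.colon (J : Set R) * J ≤ I :=
  Ideal.mul_le.2 fun _ hr s hs => Submodule.mem_colon.1 hr s hs

section epf

variable {R : Type} [CommRing R] [IsDomain R] {p : ℕ}

theorem subset_epf (I : Ideal R) : (I : Set R) ⊆ epf R p I :=
  fun x hx => ⟨1, one_ne_zero, fun _ => 1, (map_one _).symm, fun _ => one_pow p, fun _ _ _ => by
    rw [one_mul]
    exact Ideal.mem_sup_left (Ideal.mem_map_of_mem _ hx)⟩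

-- The witness `c, f` for `x` also works for `x * j`, since `(K, p^N)R⁺ · j ⊆ (I, p^N)R⁺`.
theorem mul_mem_epf_of_mul_le {I J K : Ideal R} (hKJ : K * J ≤ I) {x j : R}
    (hx : x ∈ epf R p K) (hj : j ∈ J) : x * j ∈ epf R p I := by
  obtain ⟨c, hc, f, hf0, hfp, hmem⟩ := hx
  refine ⟨c, hc, f, hf0, hfp, fun n N hN => ?_⟩
  obtain ⟨y, hy, z, hz, hyz⟩ := Submodule.mem_sup.1 (hmem n N hN)
  have hyj : y * algebraMap R (absIntClosure R) j ∈ I.map (algebraMap R (absIntClosure R)) :=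
    Ideal.map_mul (algebraMap R (absIntClosure R)) K J ▸ Ideal.map_mono hKJ <|
      Ideal.mul_mem_mul hy (Ideal.mem_map_of_mem _ hj)
  rw [map_mul, ← mul_assoc, ← hyz, add_mul]
  exact add_mem (Ideal.mem_sup_left hyj) (Ideal.mem_sup_right (Ideal.mul_mem_right _ _ hz))

end epf

theorem epf_colon_general (R : Type) [CommRing R] [IsDomain R]
    (p : ℕ) (I J : Ideal R) :
    (epf R p (I.colon J) ⊆ {x : R | ∀ j ∈ J, x * j ∈ epf R p I}) ∧
      (epf R p I = (I : Set R) → epf R p (I.colon J) = (I.colon J : Set R)) := by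
  have hcolon : epf R p (I.colon J) ⊆ {x : R | ∀ j ∈ J, x * j ∈ epf R p I} :=
    fun x hx j hj => mul_mem_epf_of_mul_le (Ideal.colon_mul_le I J) hx hj
  refine ⟨hcolon, fun hI => (subset_epf _).antisymm' fun x hx => ?_⟩
  refine Submodule.mem_colon.2 fun j hj => ?_
  have hxj : x * j ∈ epf R p I := hcolon hx j hj
  rwa [hI] at hxj

/-- `(I : J)^{epf} ⊆ (I^{epf} : J)`; in particular, if `I` is epf-closed then so is `(I : J)`. -/
theorem epf_colon (R : Type) [CommRing R] [IsDomain R] [IsNoetherianRing R]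
    (p : ℕ) (hp : p.Prime) (hpJ : (p : R) ∈ Ideal.jacobson (⊥ : Ideal R))
    (I J : Ideal R) :
    (epf R p (I.colon J) ⊆ {x : R | ∀ j ∈ J, x * j ∈ epf R p I}) ∧
      (epf R p I = (I : Set R) → epf R p (I.colon J) = (I.colon J : Set R)) :=
  epf_colon_general R p I J
end

section
/- Let R be an integral domain of mixed characteristic p, I an ideal of R, and x ∈ R. Let R^{++} denote the p-adic completion of R^+. If c^{1/p^n} x ∈ (I, p^N)R^{++} for all n, N > 0 (for some fixed nonzero c), then c^{1/p^n} x ∈ (I, p^N)R^+ for all n, N > 0; consequently x ∈ I^{epf}. -/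
set_option synthInstance.maxHeartbeats 1000000
set_option maxHeartbeats 1000000

/-- `R^{++}`: the `p`-adic completion of the absolute integral closure `R⁺`. -/
noncomputable abbrev absIntClosureCompletion (R : Type) [CommRing R] [IsDomain R] (p : ℕ) : Type :=
  AdicCompletion (Ideal.span {(p : absIntClosure R)}) (absIntClosure R)

/-- The natural ring map `R → R^{++}`. -/
noncomputable def toRpp (R : Type) [CommRing R] [IsDomain R] (p : ℕ) :
    R →+* absIntClosureCompletion R p :=
  (algebraMap (absIntClosure R) (absIntClosureCompletion R p)).comp
    (algebraMap R (absIntClosure R))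

/-!
Reduction modulo `p^N` is a ring map `R^{++} → R⁺ ⧸ p^N R⁺` that restricts to the quotient map
on `R⁺`. Hence an element of `R⁺` lying in `(I, p^N) R^{++}` already lies in `(I, p^N) R⁺`,
because this ideal contains `p^N`.
-/

theorem AdicCompletion.comap_map_algebraMap_of_pow_le {A : Type*} [CommRing A] {P J : Ideal A}
    {N : ℕ} (hPJ : P ^ N ≤ J) :
    (J.map (algebraMap A (AdicCompletion P A))).comap (algebraMap A (AdicCompletion P A)) = J := by
  refine le_antisymm (fun a ha => ?_) Ideal.le_comap_map
  have hquot := Ideal.mem_map_of_mem (evalₐ P N : AdicCompletion P A →+* A ⧸ P ^ N)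
    (Ideal.mem_comap.mp ha)
  rw [Ideal.map_map, ← RingHom.comp_apply, AlgHom.comp_algebraMap,
    Ideal.Quotient.algebraMap_eq] at hquot
  exact (Ideal.mem_quotient_iff_mem hPJ).mp hquot

theorem mem_epf_of_mem_completion_general (R : Type) [CommRing R] [IsDomain R]
    (p : ℕ) (I : Ideal R) (x c : R) (hc : c ≠ 0) (f : ℕ → absIntClosure R)
    (hf0 : f 0 = algebraMap R (absIntClosure R) c)
    (hfp : ∀ n, (f (n + 1)) ^ p = f n)
    (h : ∀ n N : ℕ, 0 < N →
      algebraMap (absIntClosure R) (absIntClosureCompletion R p)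
          (f n * algebraMap R (absIntClosure R) x) ∈
        Ideal.map (toRpp R p) I ⊔ Ideal.span {(p : absIntClosureCompletion R p) ^ N}) :
    (∀ n N : ℕ, 0 < N →
      f n * algebraMap R (absIntClosure R) x ∈
        Ideal.map (algebraMap R (absIntClosure R)) I ⊔
          Ideal.span {(p : absIntClosure R) ^ N}) ∧
      x ∈ epf R p I := by
  have hplus : ∀ n N : ℕ, 0 < N →
      f n * algebraMap R (absIntClosure R) x ∈
        Ideal.map (algebraMap R (absIntClosure R)) I ⊔
          Ideal.span {(p : absIntClosure R) ^ N} := by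
    intro n N hN
    have hpN : Ideal.span {(p : absIntClosure R)} ^ N ≤
        Ideal.map (algebraMap R (absIntClosure R)) I ⊔ Ideal.span {(p : absIntClosure R) ^ N} := by
      rw [Ideal.span_singleton_pow]
      exact le_sup_right
    have hmap : Ideal.map (algebraMap (absIntClosure R) (absIntClosureCompletion R p))
          (Ideal.map (algebraMap R (absIntClosure R)) I ⊔ Ideal.span {(p : absIntClosure R) ^ N}) =
        Ideal.map (toRpp R p) I ⊔ Ideal.span {(p : absIntClosureCompletion R p) ^ N} := by
      rw [Ideal.map_sup, Ideal.map_map, Ideal.map_span, Set.image_singleton, map_pow, map_natCast]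
      rfl
    rw [← AdicCompletion.comap_map_algebraMap_of_pow_le hpN, Ideal.mem_comap, hmap]
    exact h n N hN
  exact ⟨hplus, c, hc, f, hf0, hfp, hplus⟩

/-- If `c^{1/pⁿ} x ∈ (I, p^N) R^{++}` for all `n, N > 0`, then already
`c^{1/pⁿ} x ∈ (I, p^N) R⁺` for all `n, N > 0`; consequently `x ∈ I^{epf}`. -/
theorem mem_epf_of_mem_completion (R : Type) [CommRing R] [IsDomain R]
    (p : ℕ) (hp : p.Prime) (hp0 : (p : R) ≠ 0) (hpJ : (p : R) ∈ Ideal.jacobson (⊥ : Ideal R))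
    (I : Ideal R) (x c : R) (hc : c ≠ 0) (f : ℕ → absIntClosure R)
    (hf0 : f 0 = algebraMap R (absIntClosure R) c)
    (hfp : ∀ n, (f (n + 1)) ^ p = f n)
    (h : ∀ n N : ℕ, 0 < N →
      algebraMap (absIntClosure R) (absIntClosureCompletion R p)
          (f n * algebraMap R (absIntClosure R) x) ∈
        Ideal.map (toRpp R p) I ⊔ Ideal.span {(p : absIntClosureCompletion R p) ^ N}) :
    (∀ n N : ℕ, 0 < N →
      f n * algebraMap R (absIntClosure R) x ∈
        Ideal.map (algebraMap R (absIntClosure R)) I ⊔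
          Ideal.span {(p : absIntClosure R) ^ N}) ∧
      x ∈ epf R p I :=
  mem_epf_of_mem_completion_general R p I x c hc f hf0 hfp h
end

section
/- Let T be a ring that is p-adically complete (for a prime p). If T/pT is Noetherian, then T is Noetherian. -/
/-!
By Cohen's theorem it suffices to show that every prime `P` of `T` is finitely generated.
If `p ∈ P`, then `P` is an extension of the ideal `P / (p)` of the noetherian ring `T / (p)`
by `(p)`. If `p ∉ P`, primality gives `P ∩ (p) = p P`, so `P / p P` embeds into `T / (p)` and is
finite. A surjection `Tⁿ → P / p P` lifts to a map `Tⁿ → P` that is surjective modulo `p`, and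
since `Tⁿ` is `p`-adically complete and `P ⊆ T` is `p`-adically separated, the lift is surjective.
-/

open Submodule

variable {R : Type*} [CommRing R] {I : Ideal R}

theorem IsPrecomplete.pi {ι : Type*} [Finite ι] {M : ι → Type*} [∀ j, AddCommGroup (M j)]
    [∀ j, Module R (M j)] [∀ j, IsPrecomplete I (M j)] : IsPrecomplete I (∀ j, M j) := by
  classical
  have := Fintype.ofFinite ι
  rw [← AdicCompletion.of_surjective_iff]
  intro y
  choose x hx using fun j ↦ AdicCompletion.of_surjective I (M j) (AdicCompletion.pi I M y j)
  refine ⟨x, (AdicCompletion.piEquivOfFintype I M).injective ?_⟩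
  ext j : 1
  rw [AdicCompletion.piEquivOfFintype_apply, AdicCompletion.piEquivOfFintype_apply, ← hx j]
  rfl

variable {M : Type*} [AddCommGroup M] [Module R M]

theorem IsHausdorff.of_injective {N : Type*} [AddCommGroup N] [Module R N] [IsHausdorff I N]
    (f : M →ₗ[R] N) (hf : Function.Injective f) : IsHausdorff I M := by
  refine ⟨fun x hx ↦ hf ?_⟩
  rw [map_zero]
  refine IsHausdorff.haus ‹_› (f x) fun n ↦ ?_
  simpa using ((hx n).map f).mono (by rw [map_smul'']; exact smul_mono_right _ le_top)

instance [IsHausdorff I M] (N : Submodule R M) : IsHausdorff I N :=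
  .of_injective N.subtype N.injective_subtype

theorem Module.Finite.of_finite_quotient_smul_top [IsPrecomplete I R] [IsHausdorff I M]
    [Module.Finite R (M ⧸ (I • ⊤ : Submodule R M))] : Module.Finite R M := by
  obtain ⟨n, g, hg⟩ := Module.Finite.exists_fin' R (M ⧸ (I • ⊤ : Submodule R M))
  obtain ⟨f, rfl⟩ := Module.projective_lifting_property _ g (I • ⊤ : Submodule R M).mkQ_surjective
  have : IsPrecomplete I (Fin n → R) := .pi
  exact .of_surjective f (surjective_of_mkQ_comp_surjective hg)

theorem Ideal.Quotient.isNoetherian_of_isNoetherianRing [IsNoetherianRing (R ⧸ I)] :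
    IsNoetherian R (R ⧸ I) := by
  refine ⟨fun N ↦ ?_⟩
  have hsurj : Function.Surjective (algebraMap R (R ⧸ I)) := Ideal.Quotient.mk_surjective
  have := (IsNoetherian.noetherian (Submodule.span (R ⧸ I) (N : Set (R ⧸ I))))
    |>.restrictScalars_of_surjective hsurj
  rwa [restrictScalars_span R (R ⧸ I) hsurj, Submodule.span_eq] at this

theorem Ideal.finite_quotient_smul_top_of_inf_le_mul [IsNoetherianRing (R ⧸ I)]
    (N : Ideal R) (hN : N ⊓ I ≤ I * N) : Module.Finite R (N ⧸ (I • ⊤ : Submodule R N)) := by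
  have := Quotient.isNoetherian_of_isNoetherianRing (I := I)
  let f := I.mkQ ∘ₗ N.subtype
  have hker : I • ⊤ = LinearMap.ker f := by
    ext y
    rw [mem_smul_top_iff, smul_eq_mul, LinearMap.mem_ker, LinearMap.comp_apply, mkQ_apply,
      Quotient.mk_eq_zero, subtype_apply]
    exact ⟨fun hy ↦ mul_le_left hy, fun hy ↦ hN ⟨y.2, hy⟩⟩
  exact .of_injective _ (LinearMap.ker_eq_bot.1 (ker_liftQ_eq_bot' _ f hker))

theorem Ideal.IsPrime.inf_span_singleton_le_mul {P : Ideal R} (hP : P.IsPrime) {x : R}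
    (hx : x ∉ P) : P ⊓ span {x} ≤ span {x} * P := by
  rintro _ ⟨hyP, hy⟩
  obtain ⟨c, rfl⟩ := mem_span_singleton'.1 hy
  rw [mul_comm c x]
  exact mul_mem_mul (mem_span_singleton_self x) ((hP.mem_or_mem hyP).resolve_right hx)

theorem IsNoetherianRing.of_isAdicComplete_span_singleton (x : R)
    [IsAdicComplete (Ideal.span {x}) R] [IsNoetherianRing (R ⧸ Ideal.span {x})] :
    IsNoetherianRing R := by
  refine .of_prime fun P hP ↦ ?_
  by_cases hxP : x ∈ P
  · refine Ideal.fg_of_fg_map_of_fg_inf_ker_of_surjective (f := Ideal.Quotient.mk (Ideal.span {x}))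
      (IsNoetherian.noetherian _) ?_ Ideal.Quotient.mk_surjective
    rw [Ideal.mk_ker, inf_of_le_right ((Ideal.span_singleton_le_iff_mem P).2 hxP)]
    exact ⟨{x}, by simp⟩
  · have := Ideal.finite_quotient_smul_top_of_inf_le_mul P (hP.inf_span_singleton_le_mul hxP)
    have := Module.Finite.of_finite_quotient_smul_top (I := Ideal.span {x}) (M := P)
    exact Module.Finite.iff_fg.1 this

theorem isNoetherianRing_of_pAdicComplete_general (T : Type) [CommRing T] (p : ℕ)
    [IsAdicComplete (Ideal.span {(p : T)}) T]
    (h : IsNoetherianRing (T ⧸ Ideal.span {(p : T)})) :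
    IsNoetherianRing T :=
  .of_isAdicComplete_span_singleton (p : T)

/-- A `p`-adically complete ring whose reduction mod `p` is Noetherian is Noetherian. -/
theorem isNoetherianRing_of_pAdicComplete (T : Type) [CommRing T] (p : ℕ) (hp : p.Prime)
    [IsAdicComplete (Ideal.span {(p : T)}) T]
    (h : IsNoetherianRing (T ⧸ Ideal.span {(p : T)})) :
    IsNoetherianRing T :=
  isNoetherianRing_of_pAdicComplete_general T p h
end

section
/- With T, f, I, M as above (I finitely generated containing a power of f, f a nonzerodivisor on M): f is also a nonzerodivisor on the f-adic completion M̂ of M. -/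
/-!
If `a • x = 0` in the `a`-adic completion, lift the component `x (k + 1)` to `m : M`. Then
`a • m ∈ a ^ (k + 1) • M = a • (a ^ k • M)`, so regularity of `a` gives `m ∈ a ^ k • M`, and
`x k`, the image of `m` in `M ⧸ a ^ k • M`, vanishes.
-/

open Submodule

variable {R M : Type*} [CommRing R] [AddCommGroup M] [Module R M] {a : R}

theorem IsSMulRegular.mem_span_singleton_pow_smul_top_of_smul_mem
    (ha : IsSMulRegular M a) {k : ℕ} {m : M}
    (hm : a • m ∈ (Ideal.span {a} ^ (k + 1) • ⊤ : Submodule R M)) :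
    m ∈ (Ideal.span {a} ^ k • ⊤ : Submodule R M) := by
  rw [Ideal.span_singleton_pow, ideal_span_singleton_smul] at hm ⊢
  obtain ⟨m', -, hm'⟩ := Set.mem_smul_set.mp hm
  have hm_eq : a • a ^ k • m' = a • m := by rw [smul_smul, ← pow_succ', hm']
  exact ha hm_eq ▸ smul_mem_pointwise_smul m' (a ^ k) ⊤ mem_top

theorem IsSMulRegular.adicCompletion (ha : IsSMulRegular M a) :
    IsSMulRegular (AdicCompletion (Ideal.span {a}) M) a := by
  refine isSMulRegular_iff_right_eq_zero_of_smul.mpr fun x hx ↦ AdicCompletion.ext fun k ↦ ?_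
  obtain ⟨m, hm⟩ := Submodule.Quotient.mk_surjective _ (x.val (k + 1))
  have ham : a • m ∈ (Ideal.span {a} ^ (k + 1) • ⊤ : Submodule R M) := by
    rw [← Quotient.mk_eq_zero, Quotient.mk_smul, hm, ← AdicCompletion.val_smul_apply, hx,
      AdicCompletion.val_zero_apply]
  rw [← x.property k.le_succ, ← hm, AdicCompletion.val_zero_apply]
  exact (Quotient.mk_eq_zero _).mpr (ha.mem_span_singleton_pow_smul_top_of_smul_mem ham)

theorem smul_nonZeroDivisor_adicCompletion_general (T : Type) [CommRing T] (f : T)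
    (M : Type) [AddCommGroup M] [Module T M]
    (hf : ∀ x : M, f • x = 0 → x = 0) :
    ∀ x : AdicCompletion (Ideal.span {f}) M, f • x = 0 → x = 0 :=
  isSMulRegular_iff_right_eq_zero_of_smul.mp
    (isSMulRegular_iff_right_eq_zero_of_smul.mpr hf).adicCompletion

/-- Let `T` be a commutative ring, `I = (f₁, …, fₙ)` a finitely generated ideal containing a
power of `f`, and `M` a `T`-module on which `f` is a nonzerodivisor. Then `f` is a
nonzerodivisor on the `f`-adic completion `M̂` of `M`. -/
theorem smul_nonZeroDivisor_adicCompletion (T : Type) [CommRing T] (f : T)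
    (n : ℕ) (fs : Fin n → T) (I : Ideal T) (hI : I = Ideal.span (Set.range fs))
    (hfI : ∃ m : ℕ, f ^ m ∈ I)
    (M : Type) [AddCommGroup M] [Module T M]
    (hf : ∀ x : M, f • x = 0 → x = 0) :
    ∀ x : AdicCompletion (Ideal.span {f}) M, f • x = 0 → x = 0 :=
  smul_nonZeroDivisor_adicCompletion_general T f M hf
end

section
/- Let R be an integral domain of mixed characteristic p and S an integral extension of R contained in R^+ (e.g. S = a module-finite extension domain). If an element v ∈ R^{++} (the p-adic completion of R^+) satisfies (v_1, g^d, p^{m})^{k+1} R^{++} = (v_1, g^d, p^{m})^k (g^d, p^m) R^{++} for some k, where v_1 ∈ R^+, and both ideals contain a power of p, then the same determinantal equality holds over R^+; consequently v_1 is integral over (g^d, p^m)R^+. -/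
set_option synthInstance.maxHeartbeats 1000000
set_option maxHeartbeats 1000000

/-- `z` is integral over the ideal `J`: it satisfies an equation
`z^m + a₁ z^{m-1} + ⋯ + a_m = 0` with `aᵢ ∈ Jⁱ`. -/
def isIntegralOverIdeal (A : Type) [CommRing A] (J : Ideal A) (z : A) : Prop :=
  ∃ m : ℕ, 0 < m ∧ ∃ a : ℕ → A, (∀ i, 1 ≤ i → i ≤ m → a i ∈ J ^ i) ∧
    z ^ m + ∑ i ∈ Finset.Icc 1 m, a i * z ^ (m - i) = 0

/-!
Write `I = (v₁, gᵈ, pᵐ)` and `J = (gᵈ, pᵐ)`. Both `I^{k+1}` and `Iᵏ J` contain `p^{m(k+1)}`, and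
`R⁺ ⧸ pᴺ = R^{++} ⧸ pᴺ R^{++}`, so an inclusion of such ideals after extension to `R^{++}` already
holds in `R⁺`; this descends `I^{k+1} = Iᵏ J`. Then multiplication by `v₁` maps the finitely
generated module `Iᵏ` into `J Iᵏ`, and Cayley–Hamilton gives an equation of integral dependence of
`v₁` over `J`, since `Iᵏ` is faithful over the domain `R⁺` unless `I = 0`.
-/

open Polynomial

theorem isIntegralOverIdeal_zero {A : Type} [CommRing A] (J : Ideal A) :
    isIntegralOverIdeal A J 0 :=
  ⟨1, one_pos, 0, fun _ _ _ => zero_mem _, by simp⟩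

theorem isIntegralOverIdeal_of_eval_eq_zero {A : Type} [CommRing A] {J : Ideal A} {v : A}
    {P : A[X]} (hP : P.Monic) (hcoeff : ∀ i, P.coeff i ∈ J ^ (P.natDegree - i))
    (hv : P.eval v = 0) : isIntegralOverIdeal A J v := by
  set n := P.natDegree
  rcases Nat.eq_zero_or_pos n with hn | hn
  · have : Subsingleton A := by
      rw [(hP.natDegree_eq_zero).mp hn, eval_one] at hv
      exact subsingleton_of_zero_eq_one hv.symm
    exact Subsingleton.elim v 0 ▸ isIntegralOverIdeal_zero J
  refine ⟨n, hn, fun i => P.coeff (n - i), fun i _ hin => ?_, ?_⟩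
  · simpa [Nat.sub_sub_self hin] using hcoeff (n - i)
  · have hreindex : ∑ i ∈ Finset.Icc 1 n, P.coeff (n - i) * v ^ (n - i) =
        ∑ j ∈ Finset.range n, P.coeff j * v ^ j :=
      Finset.sum_nbij' (n - ·) (n - ·)
        (fun _ h => by simp only [Finset.mem_Icc, Finset.mem_range] at h ⊢; omega)
        (fun _ h => by simp only [Finset.mem_Icc, Finset.mem_range] at h ⊢; omega)
        (fun _ h => by simp only [Finset.mem_Icc] at h; omega)
        (fun _ h => by simp only [Finset.mem_range] at h; omega) (fun _ _ => rfl)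
    rw [hreindex, ← hv, eval_eq_sum_range, Finset.sum_range_succ, hP.coeff_natDegree, one_mul,
      add_comm]

theorem isIntegralOverIdeal_of_smul_mem_smul_top {A M : Type} [CommRing A] [AddCommGroup M]
    [Module A M] [Module.Finite A M] [FaithfulSMul A M] (J : Ideal A) {v : A}
    (h : ∀ x : M, v • x ∈ J • (⊤ : Submodule A M)) : isIntegralOverIdeal A J v := by
  obtain ⟨P, hP, -, hcoeff, hPv⟩ :=
    LinearMap.exists_monic_and_natDegree_eq_and_coeff_mem_pow_and_aeval_eq_zero A
      (algebraMap A (Module.End A M) v) J (by rintro _ ⟨x, rfl⟩; exact h x)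
  refine isIntegralOverIdeal_of_eval_eq_zero hP hcoeff ?_
  rw [aeval_algebraMap_apply] at hPv
  refine FaithfulSMul.eq_of_smul_eq_smul (α := M) fun x => ?_
  simpa using LinearMap.congr_fun hPv x

theorem Ideal.faithfulSMul_of_ne_bot {A : Type} [CommRing A] [IsDomain A] {N : Ideal A}
    (hN : N ≠ ⊥) : FaithfulSMul A N := by
  obtain ⟨z, hzN, hz0⟩ := N.ne_bot_iff.mp hN
  refine ⟨fun {a b} h => mul_right_cancel₀ hz0 ?_⟩
  simpa using congrArg Subtype.val (h ⟨z, hzN⟩)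

theorem isIntegralOverIdeal_of_pow_succ_eq_pow_mul {A : Type} [CommRing A] [IsDomain A]
    {I J : Ideal A} {v : A} {k : ℕ} (hI : I.FG) (hv : v ∈ I) (h : I ^ (k + 1) = I ^ k * J) :
    isIntegralOverIdeal A J v := by
  rcases eq_or_ne I ⊥ with rfl | hI0
  · rw [Submodule.mem_bot] at hv
    exact hv ▸ isIntegralOverIdeal_zero J
  have : Module.Finite A ↥(I ^ k) := Module.Finite.iff_fg.mpr hI.pow
  have : FaithfulSMul A ↥(I ^ k) := Ideal.faithfulSMul_of_ne_bot (pow_ne_zero k hI0)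
  refine isIntegralOverIdeal_of_smul_mem_smul_top (M := ↥(I ^ k)) J fun x => ?_
  rw [Submodule.mem_smul_top_iff, smul_eq_mul, mul_comm]
  have hvx : v * x ∈ I ^ (k + 1) := by
    rw [pow_succ']
    exact Ideal.mul_mem_mul hv x.2
  simpa [h] using hvx

theorem le_of_map_adicCompletion_le {A : Type} [CommRing A] {𝔞 K L : Ideal A} {n : ℕ}
    (hn : 𝔞 ^ n ≤ K)
    (h : L.map (algebraMap A (AdicCompletion 𝔞 A)) ≤ K.map (algebraMap A (AdicCompletion 𝔞 A))) :
    L ≤ K := by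
  intro x hx
  have hx' := Ideal.mem_map_of_mem (AdicCompletion.evalₐ 𝔞 n : AdicCompletion 𝔞 A →+* A ⧸ 𝔞 ^ n)
    (h (Ideal.mem_map_of_mem _ hx))
  rw [Ideal.map_map, AlgHom.comp_algebraMap, Ideal.Quotient.algebraMap_eq, RingHom.coe_coe,
    AlgHom.commutes, Ideal.Quotient.algebraMap_eq, Ideal.mem_quotient_iff_mem_sup,
    sup_eq_left.mpr hn] at hx'
  exact hx'

theorem pow_succ_eq_pow_mul_of_map_adicCompletion {A : Type} [CommRing A] {𝔞 I J : Ideal A}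
    {n k : ℕ} (hJI : J ≤ I) (hn : 𝔞 ^ n ≤ J)
    (h : (I.map (algebraMap A (AdicCompletion 𝔞 A))) ^ (k + 1) =
      (I.map (algebraMap A (AdicCompletion 𝔞 A))) ^ k * J.map (algebraMap A (AdicCompletion 𝔞 A))) :
    I ^ (k + 1) = I ^ k * J := by
  refine le_antisymm (le_of_map_adicCompletion_le (𝔞 := 𝔞) (n := n * (k + 1)) ?_ ?_) ?_
  · rw [pow_mul, pow_succ]
    exact Ideal.mul_mono (Ideal.pow_right_mono (hn.trans hJI) k) hn
  · rw [Ideal.map_mul, Ideal.map_pow, Ideal.map_pow, h]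
  · rw [pow_succ]
    exact Ideal.mul_mono_right hJI

theorem determinantal_descent_general (R : Type) [CommRing R] [IsDomain R]
    (p : ℕ) (g : R) (d m k : ℕ) (v₁ : absIntClosure R)
    (hyp : (Ideal.map (algebraMap (absIntClosure R) (absIntClosureCompletion R p))
          (Ideal.span {v₁, algebraMap R (absIntClosure R) g ^ d, (p : absIntClosure R) ^ m}))
            ^ (k + 1) =
        (Ideal.map (algebraMap (absIntClosure R) (absIntClosureCompletion R p))
          (Ideal.span {v₁, algebraMap R (absIntClosure R) g ^ d, (p : absIntClosure R) ^ m})) ^ k *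
          Ideal.map (algebraMap (absIntClosure R) (absIntClosureCompletion R p))
            (Ideal.span {algebraMap R (absIntClosure R) g ^ d, (p : absIntClosure R) ^ m})) :
    (Ideal.span {v₁, algebraMap R (absIntClosure R) g ^ d, (p : absIntClosure R) ^ m}) ^ (k + 1) =
      (Ideal.span {v₁, algebraMap R (absIntClosure R) g ^ d, (p : absIntClosure R) ^ m}) ^ k *
        Ideal.span {algebraMap R (absIntClosure R) g ^ d, (p : absIntClosure R) ^ m} ∧
      isIntegralOverIdeal (absIntClosure R)
        (Ideal.span {algebraMap R (absIntClosure R) g ^ d, (p : absIntClosure R) ^ m}) v₁ := by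
  have hpm : Ideal.span {(p : absIntClosure R)} ^ m ≤
      Ideal.span {algebraMap R (absIntClosure R) g ^ d, (p : absIntClosure R) ^ m} := by
    rw [Ideal.span_singleton_pow, Ideal.span_singleton_le_iff_mem]
    exact Ideal.subset_span (by simp)
  have hdet := pow_succ_eq_pow_mul_of_map_adicCompletion
    (Ideal.span_mono (Set.subset_insert _ _)) hpm hyp
  exact ⟨hdet, isIntegralOverIdeal_of_pow_succ_eq_pow_mul (Submodule.fg_span (Set.toFinite _))
    (Ideal.subset_span (by simp)) hdet⟩

/-- Descent of the determinantal equality from `R^{++}` to `R⁺`: if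
`(v₁, g^d, p^m)^{k+1} R^{++} = (v₁, g^d, p^m)^k (g^d, p^m) R^{++}` (both ideals containing a
power of `p`), then the same equality holds over `R⁺`, and consequently `v₁` is integral over
`(g^d, p^m) R⁺`. -/
theorem determinantal_descent (R : Type) [CommRing R] [IsDomain R]
    (p : ℕ) (hp : p.Prime) (hp0 : (p : R) ≠ 0) (hpJ : (p : R) ∈ Ideal.jacobson (⊥ : Ideal R))
    (g : R) (d m k : ℕ) (v₁ : absIntClosure R)
    (hyp : (Ideal.map (algebraMap (absIntClosure R) (absIntClosureCompletion R p))
          (Ideal.span {v₁, algebraMap R (absIntClosure R) g ^ d, (p : absIntClosure R) ^ m}))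
            ^ (k + 1) =
        (Ideal.map (algebraMap (absIntClosure R) (absIntClosureCompletion R p))
          (Ideal.span {v₁, algebraMap R (absIntClosure R) g ^ d, (p : absIntClosure R) ^ m})) ^ k *
          Ideal.map (algebraMap (absIntClosure R) (absIntClosureCompletion R p))
            (Ideal.span {algebraMap R (absIntClosure R) g ^ d, (p : absIntClosure R) ^ m})) :
    (Ideal.span {v₁, algebraMap R (absIntClosure R) g ^ d, (p : absIntClosure R) ^ m}) ^ (k + 1) =
      (Ideal.span {v₁, algebraMap R (absIntClosure R) g ^ d, (p : absIntClosure R) ^ m}) ^ k *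
        Ideal.span {algebraMap R (absIntClosure R) g ^ d, (p : absIntClosure R) ^ m} ∧
      isIntegralOverIdeal (absIntClosure R)
        (Ideal.span {algebraMap R (absIntClosure R) g ^ d, (p : absIntClosure R) ^ m}) v₁ :=
  determinantal_descent_general R p g d m k v₁ hyp
end
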